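/- Necessity core of Theorem 3(B) (efficiency gap for joint quantile and Expected Shortfall models): In the quantile–ES block setup, assume a' > 0 and φ'' > 0 ℙ-a.s., V_q ≠ 0 and V_e ≠ 0 ℙ-a.s., and that V_q satisfies the richness condition in ℝ^{q₁} and V_e satisfies the richness condition in ℝ^{q₂}. If there exists an invertible deterministic matrix C ∈ ℝ^{q×q} such that A = C Dᵀ S⁻¹ ℙ-a.s., then there exist constants c₁ > 0, c₃ > 0 and c₆ > 0 such that, ℙ-a.s., v = c₁ (q_v − e_v)², φ'' = c₃ / v, and a' = c₆ f (conditions (20), (22) and (25) of the paper). -/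

import Mathlib

open MeasureTheory Matrix

/-- The matrix `D` of the quantile–ES block setup: first row `(f V_qᵀ, 0)`,
second row `(0, V_eᵀ)`. -/
def qesD {q₁ q₂ : ℕ} (f : ℝ) (Vq : Fin q₁ → ℝ) (Ve : Fin q₂ → ℝ) :
    Matrix (Fin 2) (Fin q₁ ⊕ Fin q₂) ℝ :=
  Matrix.of fun i j =>
    Sum.elim (fun j₁ => if i = 0 then f * Vq j₁ else 0)
      (fun j₂ => if i = 1 then Ve j₂ else 0) j

/-- The M-estimator instrument matrix `A` of the quantile–ES block setup:
first column `(a' V_q, 0)ᵀ`, second column `(0, φ'' V_e)ᵀ`. -/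
def qesA {q₁ q₂ : ℕ} (a' phi'' : ℝ) (Vq : Fin q₁ → ℝ) (Ve : Fin q₂ → ℝ) :
    Matrix (Fin q₁ ⊕ Fin q₂) (Fin 2) ℝ :=
  Matrix.of fun i j =>
    Sum.elim (fun i₁ => if j = 0 then a' * Vq i₁ else 0)
      (fun i₂ => if j = 1 then phi'' * Ve i₂ else 0) i

/-- The conditional second-moment matrix `S` of the quantile–ES block setup. -/
noncomputable def qesS (α qv ev v : ℝ) : Matrix (Fin 2) (Fin 2) ℝ :=
  !![α * (1 - α), (1 - α) * (qv - ev);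
     (1 - α) * (qv - ev), v / α + (1 - α) * (qv - ev) ^ 2 / α]

/-- Richness condition (condition (QES2) of the paper). -/
def Rich {Ω : Type*} [MeasureSpace Ω] {n : ℕ} (V : Ω → Fin n → ℝ) : Prop :=
  ∀ B : Set Ω, MeasurableSet B → volume B = 1 →
    ∃ v : Fin (n + 1) → Fin n → ℝ, Function.Injective v ∧
      (∀ i, ∃ ω ∈ B, V ω = v i) ∧
      ∀ i : Fin (n + 1),
        LinearIndependent ℝ fun j : {j : Fin (n + 1) // j ≠ i} => v j.1

/-!
Multiplying `A = C Dᵀ S⁻¹` on the right by `S` and reading off the blocks `Cᵢⱼ` of `C` shows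
that, almost surely, `V_q` is an eigenvector of `C₁₁` and of `C₁₂ C₂₁`, and `V_e` one of `C₂₂`,
with eigenvalues `α(1-α)a'/f`, `(1-α)²(q_v-e_v)²φ''a'/f` and `φ''(v + (1-α)(q_v-e_v)²)/α`.
An endomorphism of an `n`-dimensional space with `n + 1` eigenvectors any `n` of which are
independent is a homothety, so richness forces these three eigenvalues to be almost surely
constant, and solving the three resulting equations for `a'`, `v` and `φ''` gives the claim.
-/

section GeneralPosition

variable {K E : Type*} [Field K] [AddCommGroup E] [Module K E]

theorem eq_zero_of_sum_smul_eq_zero_of_apply_eq_zero {ι : Type*} [Fintype ι] [DecidableEq ι]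
    {w : ι → E} {j : ι} (hw : LinearIndependent K fun i : {i // i ≠ j} => w i)
    {g : ι → K} (hg : ∑ i, g i • w i = 0) (hj : g j = 0) : g = 0 := by
  rw [Fintype.sum_eq_add_sum_subtype_ne _ j, hj, zero_smul, zero_add] at hg
  funext i
  by_cases hij : i = j
  · rwa [hij]
  · exact Fintype.linearIndependent_iff.mp hw (fun k => g k) hg ⟨i, hij⟩

theorem LinearMap.exists_eq_smul_id_of_generalPosition_eigenvectors [FiniteDimensional K E]
    {n : ℕ} (hn : Module.finrank K E = n) (f : E →ₗ[K] E) {w : Fin (n + 1) → E}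
    (hw : ∀ i, LinearIndependent K fun j : {j // j ≠ i} => w j.1)
    {μ : Fin (n + 1) → K} (hf : ∀ i, f (w i) = μ i • w i) :
    ∃ c : K, f = c • LinearMap.id := by
  have hdep : ¬ LinearIndependent K w := fun h => by
    simpa [hn] using h.fintype_card_le_finrank
  obtain ⟨g, hg, i₀, hgi₀⟩ := Fintype.not_linearIndependent_iff.mp hdep
  have hg_ne : ∀ i, g i ≠ 0 := fun i hi =>
    hgi₀ (congrFun (eq_zero_of_sum_smul_eq_zero_of_apply_eq_zero (hw i) hg hi) i₀)
  -- `f - μ i₀` maps the relation `g` (no zero coefficient) to one with a zero coefficient.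
  have hμ : ∀ i, μ i = μ i₀ := by
    have hsum : ∑ i, (g i * (μ i - μ i₀)) • w i = 0 := by
      calc ∑ i, (g i * (μ i - μ i₀)) • w i = f (∑ i, g i • w i) - μ i₀ • ∑ i, g i • w i := by
            simp only [map_sum, map_smul, hf, Finset.smul_sum, smul_smul, ← Finset.sum_sub_distrib,
              ← sub_smul, mul_sub, mul_comm]
        _ = 0 := by rw [hg, map_zero, smul_zero, sub_zero]
    intro i
    have := congrFun (eq_zero_of_sum_smul_eq_zero_of_apply_eq_zero (hw i₀) hsum (by simp)) i
    exact sub_eq_zero.mp ((mul_eq_zero.mp this).resolve_left (hg_ne i))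
  refine ⟨μ i₀, LinearMap.ext_on_range ((hw i₀).span_eq_top_of_card_eq_finrank' ?_) fun j => ?_⟩
  · simp [hn, Fintype.card_subtype_compl]
  · simp [hf, hμ]

end GeneralPosition

theorem exists_measurableSet_measure_eq_one_of_ae {Ω : Type*} [MeasurableSpace Ω] {μ : Measure Ω}
    [IsProbabilityMeasure μ] {p : Ω → Prop} (hp : ∀ᵐ ω ∂μ, p ω) :
    ∃ B, MeasurableSet B ∧ μ B = 1 ∧ ∀ ω ∈ B, p ω := by
  refine ⟨(toMeasurable μ {ω | ¬ p ω})ᶜ, (measurableSet_toMeasurable _ _).compl, ?_, ?_⟩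
  · rw [prob_compl_eq_one_sub (measurableSet_toMeasurable _ _), measure_toMeasurable,
      ae_iff.mp hp, tsub_zero]
  · exact fun ω hω => not_not.mp fun h => hω (subset_toMeasurable _ _ h)

theorem Rich.exists_ae_eq_of_mulVec_eq_smul {Ω : Type*} [MeasureSpace Ω]
    [IsProbabilityMeasure (volume : Measure Ω)] {n : ℕ} {V : Ω → Fin n → ℝ} (hV : Rich V)
    (M : Matrix (Fin n) (Fin n) ℝ) {μ : Ω → ℝ} (h : ∀ᵐ ω, V ω ≠ 0 ∧ M *ᵥ V ω = μ ω • V ω) :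
    ∃ c, ∀ᵐ ω, μ ω = c := by
  obtain ⟨B, hBm, hB1, hB⟩ := exists_measurableSet_measure_eq_one_of_ae h
  obtain ⟨w, -, hwV, hw⟩ := hV B hBm hB1
  choose ω hωB hωw using hwV
  obtain ⟨c, hc⟩ := M.mulVecLin.exists_eq_smul_id_of_generalPosition_eigenvectors
    (Module.finrank_fin_fun ℝ) hw (μ := fun i => μ (ω i))
    fun i => by simpa [hωw] using (hB _ (hωB i)).2
  refine ⟨c, h.mono fun ω' ⟨hne, heig⟩ => ?_⟩
  have : M *ᵥ V ω' = c • V ω' := by simpa using LinearMap.congr_fun hc (V ω')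
  exact smul_left_injective ℝ hne (heig.symm.trans this)

theorem qesS_det (α qv ev v : ℝ) (hα : α ≠ 0) : (qesS α qv ev v).det = (1 - α) * v := by
  rw [qesS, det_fin_two_of]; field_simp; ring

theorem qes_toBlocks_mulVec_eq_smul {q₁ q₂ : ℕ} {α a' φ f v qv ev : ℝ} {Vq : Fin q₁ → ℝ} {Ve : Fin q₂ → ℝ}
    {C : Matrix (Fin q₁ ⊕ Fin q₂) (Fin q₁ ⊕ Fin q₂) ℝ}
    (hα : α ≠ 0) (hα1 : α ≠ 1) (hf : f ≠ 0) (hv : v ≠ 0)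
    (hA : qesA a' φ Vq Ve = C * (qesD f Vq Ve)ᵀ * (qesS α qv ev v)⁻¹) :
    C.toBlocks₁₁ *ᵥ Vq = (α * (1 - α) * a' / f) • Vq ∧
    C.toBlocks₁₂ *ᵥ Ve = ((1 - α) * (qv - ev) * a') • Vq ∧
    C.toBlocks₂₁ *ᵥ Vq = ((1 - α) * (qv - ev) * φ / f) • Ve ∧
    C.toBlocks₂₂ *ᵥ Ve = (φ * (v + (1 - α) * (qv - ev) ^ 2) / α) • Ve := by
  have hS : IsUnit (qesS α qv ev v).det := by
    rw [qesS_det _ _ _ _ hα]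
    exact (mul_ne_zero (sub_ne_zero.mpr hα1.symm) hv).isUnit
  have hAS : qesA a' φ Vq Ve * qesS α qv ev v = C * (qesD f Vq Ve)ᵀ := by
    rw [hA, Matrix.mul_assoc, nonsing_inv_mul _ hS, Matrix.mul_one]
  have hq₀ := fun i => congrFun₂ hAS (.inl i) 0
  have hq₁ := fun i => congrFun₂ hAS (.inl i) 1
  have he₀ := fun i => congrFun₂ hAS (.inr i) 0
  have he₁ := fun i => congrFun₂ hAS (.inr i) 1
  simp only [qesA, qesD, qesS, mul_apply, of_apply, transpose_apply, Fintype.sum_sum_type,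
    Sum.elim_inl, Sum.elim_inr, cons_val', cons_val_zero, cons_val_one, cons_val_fin_one, ite_mul,
    zero_mul, mul_zero, Finset.sum_ite_eq', Finset.mem_univ, ↓reduceIte, zero_ne_one, one_ne_zero,
    Finset.sum_const_zero, add_zero, zero_add, mul_left_comm _ f, ← Finset.mul_sum] at hq₀ hq₁ he₀ he₁
  refine ⟨funext fun i => ?_, funext fun i => ?_, funext fun i => ?_, funext fun i => ?_⟩ <;>
    simp only [mulVec, dotProduct, toBlocks₁₁, toBlocks₁₂, toBlocks₂₁, toBlocks₂₂, of_apply,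
      Pi.smul_apply, smul_eq_mul] <;> field_simp
  · linear_combination -hq₀ i
  · linear_combination -hq₁ i
  · linear_combination -he₀ i
  · rw [← he₁ i]; field_simp

theorem qes_conditions_of_eigenvalues {α f v d a' φ ca cd k : ℝ} (hα0 : 0 < α) (hα1 : α < 1)
    (hf : 0 < f) (hv : 0 < v) (hd : 0 < d) (ha' : 0 < a') (hφ : 0 < φ)
    (hca : α * (1 - α) * a' / f = ca) (hk : (1 - α) * d * φ / f * ((1 - α) * d * a') = k)
    (hcd : φ * (v + (1 - α) * d ^ 2) / α = cd) :
    0 < (1 - α) * (ca * cd - k) / k ∧ 0 < α * (ca * cd - k) / ca ∧ 0 < ca / (α * (1 - α)) ∧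
      v = (1 - α) * (ca * cd - k) / k * d ^ 2 ∧ φ = α * (ca * cd - k) / ca / v ∧
      a' = ca / (α * (1 - α)) * f := by
  have h1α : 0 < 1 - α := sub_pos.mpr hα1
  have hk_eq : k = ca * ((1 - α) * d ^ 2 * φ / α) := by
    rw [← hca, ← hk]; field_simp
  have hgap : ca * cd - k = ca * (φ * v / α) := by
    rw [hk_eq, ← hcd]; field_simp; ring
  rw [hgap, hk_eq, ← hca]
  refine ⟨by positivity, by positivity, by positivity, ?_, ?_, ?_⟩ <;> field_simp

theorem qes_efficiency_gap_necessity_general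
    {Ω : Type*} [MeasureSpace Ω] [IsProbabilityMeasure (volume : Measure Ω)]
    {q₁ q₂ : ℕ}
    {α : ℝ} (hα : α ∈ Set.Ioo (0 : ℝ) 1)
    (Vq : Ω → Fin q₁ → ℝ) (Ve : Ω → Fin q₂ → ℝ) (f v qv ev g' phi' phi'' : Ω → ℝ)
    (hfpos : ∀ᵐ ω, 0 < f ω) (hvpos : ∀ᵐ ω, 0 < v ω)
    (hqe : ∀ᵐ ω, ev ω < qv ω)
    (ha'pos : ∀ᵐ ω, 0 < g' ω + phi' ω / α)
    (hphi''pos : ∀ᵐ ω, 0 < phi'' ω)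
    (hVqne : ∀ᵐ ω, Vq ω ≠ 0) (hVene : ∀ᵐ ω, Ve ω ≠ 0)
    (hrichq : Rich Vq) (hriche : Rich Ve)
    (hCex : ∃ C : Matrix (Fin q₁ ⊕ Fin q₂) (Fin q₁ ⊕ Fin q₂) ℝ, IsUnit C.det ∧
      ∀ᵐ ω, qesA (g' ω + phi' ω / α) (phi'' ω) (Vq ω) (Ve ω)
        = C * (qesD (f ω) (Vq ω) (Ve ω))ᵀ * (qesS α (qv ω) (ev ω) (v ω))⁻¹) :
    ∃ c₁ > (0 : ℝ), ∃ c₃ > (0 : ℝ), ∃ c₆ > (0 : ℝ),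
      (∀ᵐ ω, v ω = c₁ * (qv ω - ev ω) ^ 2) ∧
      (∀ᵐ ω, phi'' ω = c₃ / v ω) ∧
      (∀ᵐ ω, g' ω + phi' ω / α = c₆ * f ω) := by
  obtain ⟨hα0, hα1⟩ := hα
  obtain ⟨C, -, hC⟩ := hCex
  have hblocks := (hfpos.and <| hvpos.and hC).mono fun ω ⟨hf, hv, hA⟩ =>
    qes_toBlocks_mulVec_eq_smul hα0.ne' hα1.ne hf.ne' hv.ne' hA
  obtain ⟨ca, hca⟩ := hrichq.exists_ae_eq_of_mulVec_eq_smul C.toBlocks₁₁ <| by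
    filter_upwards [hVqne, hblocks] with ω hne h using ⟨hne, h.1⟩
  obtain ⟨cd, hcd⟩ := hriche.exists_ae_eq_of_mulVec_eq_smul C.toBlocks₂₂ <| by
    filter_upwards [hVene, hblocks] with ω hne h using ⟨hne, h.2.2.2⟩
  obtain ⟨k, hk⟩ := hrichq.exists_ae_eq_of_mulVec_eq_smul (C.toBlocks₁₂ * C.toBlocks₂₁) <| by
    filter_upwards [hVqne, hblocks] with ω hne h
    exact ⟨hne, by rw [← mulVec_mulVec, h.2.2.1, mulVec_smul, h.2.1, smul_smul]⟩
  have hpoint := (hfpos.and <| hvpos.and <| hqe.and <| ha'pos.and <| hphi''pos.and <|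
      hca.and <| hcd.and hk).mono fun ω ⟨hf, hv, hqe, ha', hφ, hca, hcd, hk⟩ =>
    qes_conditions_of_eigenvalues hα0 hα1 hf hv (sub_pos.mpr hqe) ha' hφ hca hk hcd
  obtain ⟨ω₀, hc₁, hc₃, hc₆, -⟩ := hpoint.exists
  exact ⟨_, hc₁, _, hc₃, _, hc₆, hpoint.mono fun _ h => h.2.2.2.1,
    hpoint.mono fun _ h => h.2.2.2.2.1, hpoint.mono fun _ h => h.2.2.2.2.2⟩

/-- Necessity core of Theorem 3(B): if the M-estimator instrument matrix
`A` of the quantile–ES model coincides a.s. with an efficient instrument `C Dᵀ S⁻¹` for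
some deterministic invertible `C`, then there are constants `c₁, c₃, c₆ > 0` such that,
ℙ-a.s., `v = c₁ (q_v − e_v)²`, `φ'' = c₃ / v` and `a' = c₆ f`
(conditions (20), (22) and (25) of the paper). -/
theorem qes_efficiency_gap_necessity
    {Ω : Type*} [MeasureSpace Ω] [IsProbabilityMeasure (volume : Measure Ω)]
    {q₁ q₂ : ℕ} (hq₁ : 1 ≤ q₁) (hq₂ : 1 ≤ q₂)
    {α : ℝ} (hα : α ∈ Set.Ioo (0 : ℝ) 1)
    (Vq : Ω → Fin q₁ → ℝ) (Ve : Ω → Fin q₂ → ℝ) (f v qv ev g' phi' phi'' : Ω → ℝ)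
    (hVqmeas : Measurable Vq) (hVemeas : Measurable Ve)
    (hfmeas : Measurable f) (hvmeas : Measurable v)
    (hqvmeas : Measurable qv) (hevmeas : Measurable ev)
    (hg'meas : Measurable g') (hphi'meas : Measurable phi')
    (hphi''meas : Measurable phi'')
    (hfpos : ∀ᵐ ω, 0 < f ω) (hvpos : ∀ᵐ ω, 0 < v ω)
    (hqe : ∀ᵐ ω, ev ω < qv ω)
    (ha'pos : ∀ᵐ ω, 0 < g' ω + phi' ω / α)
    (hphi''pos : ∀ᵐ ω, 0 < phi'' ω)
    (hVqne : ∀ᵐ ω, Vq ω ≠ 0) (hVene : ∀ᵐ ω, Ve ω ≠ 0)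
    (hrichq : Rich Vq) (hriche : Rich Ve)
    (hCex : ∃ C : Matrix (Fin q₁ ⊕ Fin q₂) (Fin q₁ ⊕ Fin q₂) ℝ, IsUnit C.det ∧
      ∀ᵐ ω, qesA (g' ω + phi' ω / α) (phi'' ω) (Vq ω) (Ve ω)
        = C * (qesD (f ω) (Vq ω) (Ve ω))ᵀ * (qesS α (qv ω) (ev ω) (v ω))⁻¹) :
    ∃ c₁ > (0 : ℝ), ∃ c₃ > (0 : ℝ), ∃ c₆ > (0 : ℝ),
      (∀ᵐ ω, v ω = c₁ * (qv ω - ev ω) ^ 2) ∧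
      (∀ᵐ ω, phi'' ω = c₃ / v ω) ∧
      (∀ᵐ ω, g' ω + phi' ω / α = c₆ * f ω) :=
  qes_efficiency_gap_necessity_general hα Vq Ve f v qv ev g' phi' phi'' hfpos hvpos hqe ha'pos
    hphi''pos hVqne hVene hrichq hriche hCex
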